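/- The Gaussian curvature K(x,y) = −Δ log λ/(2λ), with λ(x,y) = 4f(x,y)/(x²+y²+1) and f as the parallelogram shape potential, tends to 0 as (x,y) tends to any of the four singular points (±1, 0), (0, ±1). -/
import Mathlib


open Filter Topology

/-- The shape potential factor in stereographic coordinates. -/
noncomputable def fP (x y : ℝ) : ℝ :=
  2 / ((x + 1) ^ 2 + y ^ 2) + 2 / ((x - 1) ^ 2 + y ^ 2) +
    1 / (2 * (x ^ 2 + (y + 1) ^ 2)) + 1 / (2 * (x ^ 2 + (y - 1) ^ 2))

/-- The Gaussian curvature of the reduced Jacobi–Maupertuis metric on the parallelogram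
shape sphere in stereographic coordinates. -/
noncomputable def KP (x y : ℝ) : ℝ :=
  -((x ^ 2 + y ^ 2 + 1) / (8 * fP x y)) *
    (256 * (x ^ 2 + y ^ 2) /
      (5 + 5 * x ^ 4 - 6 * y ^ 2 + 5 * y ^ 4 + 2 * x ^ 2 * (3 + 5 * y ^ 2)) ^ 2)

/-- The four singular points (binary and simultaneous binary collisions). -/
def singPts : Set (ℝ × ℝ) := {(1, 0), (-1, 0), (0, 1), (0, -1)}

lemma aux_blow {p : ℝ × ℝ} {d : ℝ × ℝ → ℝ} (hd : ContinuousAt d p) (hd0 : d p = 0)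
    (hpos : ∀ q : ℝ × ℝ, q ≠ p → 0 < d q) {c : ℝ} (hc : 0 < c)
    (hle : ∀ q : ℝ × ℝ, c / d q ≤ fP q.1 q.2) (hp : p ∈ singPts) :
    Tendsto (fun q : ℝ × ℝ => fP q.1 q.2) (𝓝[singPtsᶜ] p) atTop := by
  have h1 : Tendsto d (𝓝[singPtsᶜ] p) (𝓝[>] (0 : ℝ)) := by
    rw [tendsto_nhdsWithin_iff]
    constructor
    · have := hd.tendsto.mono_left (nhdsWithin_le_nhds (s := singPtsᶜ))
      rwa [hd0] at this
    · filter_upwards [self_mem_nhdsWithin] with q hq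
      exact hpos q (fun h => hq (h ▸ hp))
  have h2 : Tendsto (fun q : ℝ × ℝ => (d q)⁻¹) (𝓝[singPtsᶜ] p) atTop :=
    tendsto_inv_nhdsGT_zero.comp h1
  have h3 : Tendsto (fun q : ℝ × ℝ => c / d q) (𝓝[singPtsᶜ] p) atTop := by
    simpa [div_eq_mul_inv] using h2.const_mul_atTop hc
  exact tendsto_atTop_mono (fun q => hle q) h3

lemma KP_main (p : ℝ × ℝ)
    (hf : Tendsto (fun q : ℝ × ℝ => fP q.1 q.2) (𝓝[singPtsᶜ] p) atTop)
    (hD : (5 + 5 * p.1 ^ 4 - 6 * p.2 ^ 2 + 5 * p.2 ^ 4 + 2 * p.1 ^ 2 * (3 + 5 * p.2 ^ 2)) ≠ 0) :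
    Tendsto (fun q : ℝ × ℝ => KP q.1 q.2) (𝓝[singPtsᶜ] p) (𝓝 0) := by
  have h1 : Tendsto (fun q : ℝ × ℝ => (fP q.1 q.2)⁻¹) (𝓝[singPtsᶜ] p) (𝓝 0) :=
    hf.inv_tendsto_atTop
  set G := fun q : ℝ × ℝ => -((q.1 ^ 2 + q.2 ^ 2 + 1) / 8) *
    (256 * (q.1 ^ 2 + q.2 ^ 2) /
      (5 + 5 * q.1 ^ 4 - 6 * q.2 ^ 2 + 5 * q.2 ^ 4 + 2 * q.1 ^ 2 * (3 + 5 * q.2 ^ 2)) ^ 2)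
    with hGdef
  have hG : ContinuousAt G p := by
    apply ContinuousAt.mul
    · fun_prop
    · exact ContinuousAt.div (by fun_prop) (by fun_prop) (pow_ne_zero 2 hD)
  have h2 : Tendsto (fun q : ℝ × ℝ => G q * (fP q.1 q.2)⁻¹) (𝓝[singPtsᶜ] p)
      (𝓝 (G p * 0)) := (hG.tendsto.mono_left nhdsWithin_le_nhds).mul h1
  rw [mul_zero] at h2
  refine h2.congr fun q => ?_
  simp only [hGdef, KP]
  ring

theorem curvature_tendsto_zero_at_collisions :
    ∀ p ∈ singPts,
      Tendsto (fun q : ℝ × ℝ => KP q.1 q.2) (𝓝[singPtsᶜ] p) (𝓝 0) := by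
  intro p hp
  have key : ∀ q : ℝ × ℝ, 0 ≤ 2 / ((q.1 + 1) ^ 2 + q.2 ^ 2) ∧
      0 ≤ 2 / ((q.1 - 1) ^ 2 + q.2 ^ 2) ∧
      0 ≤ 1 / (2 * (q.1 ^ 2 + (q.2 + 1) ^ 2)) ∧
      0 ≤ 1 / (2 * (q.1 ^ 2 + (q.2 - 1) ^ 2)) := fun q =>
    ⟨by positivity, by positivity, by positivity, by positivity⟩
  rcases hp with hp | hp | hp | hp <;> subst hp
  · refine KP_main _ (aux_blow (d := fun q : ℝ × ℝ => (q.1 - 1) ^ 2 + q.2 ^ 2)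
      (by fun_prop) (by norm_num) ?_ (c := 2) (by norm_num) ?_ (by left; rfl)) (by norm_num)
    · intro q hq
      rcases lt_or_eq_of_le (by positivity : (0:ℝ) ≤ (q.1 - 1) ^ 2 + q.2 ^ 2) with h | h
      · exact h
      · exfalso; apply hq
        have h1 : q.1 = 1 := by nlinarith [sq_nonneg (q.1 - 1), sq_nonneg q.2]
        have h2 : q.2 = 0 := by nlinarith [sq_nonneg (q.1 - 1), sq_nonneg q.2]
        exact Prod.ext h1 h2
    · intro q
      obtain ⟨a, b, c, d⟩ := key q
      unfold fP; linarith
  · refine KP_main _ (aux_blow (d := fun q : ℝ × ℝ => (q.1 + 1) ^ 2 + q.2 ^ 2)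
      (by fun_prop) (by norm_num) ?_ (c := 2) (by norm_num) ?_ (by right; left; rfl)) (by norm_num)
    · intro q hq
      rcases lt_or_eq_of_le (by positivity : (0:ℝ) ≤ (q.1 + 1) ^ 2 + q.2 ^ 2) with h | h
      · exact h
      · exfalso; apply hq
        have h1 : q.1 = -1 := by nlinarith [sq_nonneg (q.1 + 1), sq_nonneg q.2]
        have h2 : q.2 = 0 := by nlinarith [sq_nonneg (q.1 + 1), sq_nonneg q.2]
        exact Prod.ext h1 h2
    · intro q
      obtain ⟨a, b, c, d⟩ := key q
      unfold fP; linarith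
  · refine KP_main _ (aux_blow (d := fun q : ℝ × ℝ => 2 * (q.1 ^ 2 + (q.2 - 1) ^ 2))
      (by fun_prop) (by norm_num) ?_ (c := 1) (by norm_num) ?_ (by right; right; left; rfl))
      (by norm_num)
    · intro q hq
      rcases lt_or_eq_of_le (by positivity : (0:ℝ) ≤ 2 * (q.1 ^ 2 + (q.2 - 1) ^ 2)) with h | h
      · exact h
      · exfalso; apply hq
        have h1 : q.1 = 0 := by nlinarith [sq_nonneg q.1, sq_nonneg (q.2 - 1)]
        have h2 : q.2 = 1 := by nlinarith [sq_nonneg q.1, sq_nonneg (q.2 - 1)]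
        exact Prod.ext h1 h2
    · intro q
      obtain ⟨a, b, c, d⟩ := key q
      unfold fP; linarith
  · refine KP_main _ (aux_blow (d := fun q : ℝ × ℝ => 2 * (q.1 ^ 2 + (q.2 + 1) ^ 2))
      (by fun_prop) (by norm_num) ?_ (c := 1) (by norm_num) ?_ (by right; right; right; rfl))
      (by norm_num)
    · intro q hq
      rcases lt_or_eq_of_le (by positivity : (0:ℝ) ≤ 2 * (q.1 ^ 2 + (q.2 + 1) ^ 2)) with h | h
      · exact h
      · exfalso; apply hq
        have h1 : q.1 = 0 := by nlinarith [sq_nonneg q.1, sq_nonneg (q.2 + 1)]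
        have h2 : q.2 = -1 := by nlinarith [sq_nonneg q.1, sq_nonneg (q.2 + 1)]
        exact Prod.ext h1 h2
    · intro q
      obtain ⟨a, b, c, d⟩ := key q
      unfold fP; linarith
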